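/- Let R = ℂ[x,x⁻¹,y,y⁻¹], let B ⊆ R be the ℂ-subspace spanned by the monomials xⁱyʲ with i ≥ 0 and j ∈ ℤ, and let n be an odd natural number. Set M = x^{−(n−1)/2}B/B and M^⊥ = x^{−(n+1)/2}B/B inside V = x⁻ⁿB/B. Then the ℂ-linear map ℂ[y,y⁻¹] → M^⊥/M sending h to the class of x^{−(n+1)/2}·h is bijective, and for all h, h′ ∈ ℂ[y,y⁻¹] the pairing value β(x^{−(n+1)/2}h, x^{−(n+1)/2}h′) equals the class of x⁻¹y⁻¹hh′ in R/B, where β is induced by (f,g) ↦ xⁿy⁻¹fg. (Hence the sublagrangian reduction M^⊥/M carries the rank-one form ⟨1/w⟩ = ⟨w⟩ over ℂ[w,w⁻¹], giving the entry ⟨w⟩ in the odd-n matrix of d⁰.) -/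

import Mathlib

noncomputable section

/-- The Laurent polynomial ring `ℂ[x,x⁻¹,y,y⁻¹]` as the monoid algebra of `ℤ × ℤ` over `ℂ`. -/
abbrev LaurentR : Type := AddMonoidAlgebra ℂ (ℤ × ℤ)

/-- The monomial `xⁱyʲ`. -/
def mono (i j : ℤ) : LaurentR := AddMonoidAlgebra.single (i, j) 1

/-- `x` -/
def xx : LaurentR := mono 1 0
/-- `x⁻¹` -/
def xxInv : LaurentR := mono (-1) 0
/-- `y` -/
def yy : LaurentR := mono 0 1
/-- `y⁻¹` -/
def yyInv : LaurentR := mono 0 (-1)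

/-- `A = ℂ[x,y]`, the ℂ-subspace spanned by monomials `xⁱyʲ` with `i ≥ 0`, `j ≥ 0`. -/
def Asub : Submodule ℂ LaurentR := Submodule.span ℂ {r | ∃ (i : ℕ) (j : ℕ), r = mono i j}
/-- `B = ℂ[x,y,y⁻¹]`, the ℂ-subspace spanned by monomials `xⁱyʲ` with `i ≥ 0`, `j ∈ ℤ`. -/
def Bsub : Submodule ℂ LaurentR := Submodule.span ℂ {r | ∃ (i : ℕ) (j : ℤ), r = mono i j}
/-- `C = ℂ[x,x⁻¹,y]`, the ℂ-subspace spanned by monomials `xⁱyʲ` with `i ∈ ℤ`, `j ≥ 0`. -/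
def Csub : Submodule ℂ LaurentR := Submodule.span ℂ {r | ∃ (i : ℤ) (j : ℕ), r = mono i j}
/-- `ℂ[y,y⁻¹]`, the ℂ-subspace spanned by the monomials `yʲ`, `j ∈ ℤ`. -/
def Dy : Submodule ℂ LaurentR := Submodule.span ℂ {r | ∃ (j : ℤ), r = mono 0 j}
/-- `ℂ[x,x⁻¹]`, the ℂ-subspace spanned by the monomials `xⁱ`, `i ∈ ℤ`. -/
def Dx : Submodule ℂ LaurentR := Submodule.span ℂ {r | ∃ (i : ℤ), r = mono i 0}

/-- `u·L = {u·f : f ∈ L}` as a `ℂ`-submodule of `LaurentR`. -/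
def dil (u : LaurentR) (L : Submodule ℂ LaurentR) : Submodule ℂ LaurentR :=
  L.map (LinearMap.mulLeft ℂ u)

/-!
In the monomial basis of `ℂ[x,x⁻¹,y,y⁻¹]`, the subspace `x⁻ᵏB` is spanned by the monomials of
`x`-degree at least `-k`. For `n = 2m + 1` this splits `M^⊥ = x^{-(m+1)}B` as the direct sum of
`x^{-(m+1)}ℂ[y,y⁻¹]` (the monomials of `x`-degree exactly `-(m+1)`) and `M = x^{-m}B`, so
`h ↦ [x^{-(m+1)}h]` is an isomorphism `ℂ[y,y⁻¹] ≃ M^⊥/M`. The pairing formula is the identity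
`x^{2m+1} · x^{-(m+1)} · x^{-(m+1)} = x⁻¹`.
-/

section Quotient
open Function LinearMap Submodule

theorem Submodule.injective_mkQ_comp {R E N : Type*} [Ring R] [AddCommGroup E] [Module R E]
    [AddCommGroup N] [Module R N] {M : Submodule R E} {f : N →ₗ[R] E} (hf : Injective f)
    (hd : Disjoint (range f) M) : Injective (M.mkQ ∘ₗ f) := by
  refine (injective_iff_map_eq_zero _).2 fun x hx => (map_eq_zero_iff f hf).1 ?_
  exact (disjoint_def.1 hd) _ (mem_range_self f x) ((Quotient.mk_eq_zero M).1 hx)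

theorem Submodule.range_mkQ_comp_eq_map_sup {R E N : Type*} [Ring R] [AddCommGroup E]
    [Module R E] [AddCommGroup N] [Module R N] (M : Submodule R E) (f : N →ₗ[R] E) :
    range (M.mkQ ∘ₗ f) = (range f ⊔ M).map M.mkQ := by
  rw [range_comp, map_sup, mkQ_map_self, sup_bot_eq]

end Quotient

namespace AddMonoidAlgebra

open scoped Pointwise

section Supported
variable {R S M : Type*} [Semiring R] [Semiring S] [Module R S] {s t : Set M}

theorem supported_union : supported R S (s ∪ t) = supported R S s ⊔ supported R S t := by
  simp only [supported_eq_map, Finsupp.supported_union, Submodule.map_sup]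

theorem disjoint_supported_supported (h : Disjoint s t) :
    Disjoint (supported R S s) (supported R S t) := by
  simp only [supported_eq_map]
  exact Submodule.disjoint_map (coeffLinearEquiv R).symm.injective
    (Finsupp.disjoint_supported_supported h)

end Supported

theorem map_mulLeft_single_supported {k G : Type*} [CommSemiring k] [AddGroup G] (v : G)
    (s : Set G) :
    (supported k k s).map (LinearMap.mulLeft k (single v 1)) = supported k k (v +ᵥ s) := by
  rw [supported_eq_span_single, supported_eq_span_single, Submodule.map_span, Set.image_image,
    ← Set.image_vadd, Set.image_image]
  simp [single_mul_single]

end AddMonoidAlgebra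

open AddMonoidAlgebra

lemma mono_mul_mono (i j i' j' : ℤ) : mono i j * mono i' j' = mono (i + i') (j + j') := by
  simp [mono, single_mul_single]

lemma mono_pow (k : ℕ) (i j : ℤ) : mono i j ^ k = mono (k * i) (k * j) := by
  simp [mono, single_pow]

lemma xxInv_pow (k : ℕ) : xxInv ^ k = mono (-k) 0 := by
  simp [xxInv, mono_pow]

lemma isUnit_xxInv : IsUnit xxInv :=
  IsUnit.of_mul_eq_one xx (by simp [xxInv, xx, mono_mul_mono]; rfl)

lemma xx_pow_mul_xxInv_pow_mul_xxInv_pow (m : ℕ) :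
    xx ^ (2 * m + 1) * xxInv ^ (m + 1) * xxInv ^ (m + 1) = xxInv := by
  rw [xx, xxInv_pow, mono_pow, mono_mul_mono, mono_mul_mono, xxInv]
  congr 1
  push_cast
  ring

lemma Bsub_eq_supported : Bsub = supported ℂ ℂ {p : ℤ × ℤ | 0 ≤ p.1} := by
  rw [Bsub, supported_eq_span_single]
  congr 1
  ext r
  constructor
  · rintro ⟨i, j, rfl⟩
    exact ⟨(i, j), by simp, rfl⟩
  · rintro ⟨⟨i, j⟩, hi, rfl⟩
    exact ⟨i.toNat, j, by simp [mono, Int.toNat_of_nonneg hi]⟩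

lemma Dy_eq_supported : Dy = supported ℂ ℂ {p : ℤ × ℤ | p.1 = 0} := by
  rw [Dy, supported_eq_span_single]
  congr 1
  ext r
  constructor
  · rintro ⟨j, rfl⟩
    exact ⟨(0, j), rfl, rfl⟩
  · rintro ⟨⟨i, j⟩, hi, rfl⟩
    exact ⟨j, by simp_all [mono]⟩

lemma dil_xxInv_pow_Bsub (k : ℕ) : dil (xxInv ^ k) Bsub = supported ℂ ℂ {p | -(k : ℤ) ≤ p.1} := by
  rw [dil, xxInv_pow, Bsub_eq_supported, mono, map_mulLeft_single_supported]
  congr 1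
  ext p
  simp only [Set.mem_vadd_set_iff_neg_vadd_mem, Prod.neg_mk, neg_neg, neg_zero, vadd_eq_add,
    Set.mem_ofPred_eq, Prod.fst_add]
  omega

lemma dil_xxInv_pow_Dy (k : ℕ) : dil (xxInv ^ k) Dy = supported ℂ ℂ {p | p.1 = -(k : ℤ)} := by
  rw [dil, xxInv_pow, Dy_eq_supported, mono, map_mulLeft_single_supported]
  congr 1
  ext p
  simp only [Set.mem_vadd_set_iff_neg_vadd_mem, Prod.neg_mk, neg_neg, neg_zero, vadd_eq_add,
    Set.mem_ofPred_eq, Prod.fst_add]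
  omega

lemma dil_xxInv_pow_succ_Bsub (m : ℕ) :
    dil (xxInv ^ (m + 1)) Bsub = dil (xxInv ^ (m + 1)) Dy ⊔ dil (xxInv ^ m) Bsub := by
  rw [dil_xxInv_pow_Bsub, dil_xxInv_pow_Dy, dil_xxInv_pow_Bsub, ← supported_union]
  congr 1
  ext p
  simp only [Set.mem_ofPred_eq, Set.mem_union]
  omega

lemma disjoint_dil_xxInv_pow_succ_Dy (m : ℕ) :
    Disjoint (dil (xxInv ^ (m + 1)) Dy) (dil (xxInv ^ m) Bsub) := by
  rw [dil_xxInv_pow_Dy, dil_xxInv_pow_Bsub]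
  refine disjoint_supported_supported (Set.disjoint_left.2 fun p hp hp' => ?_)
  simp only [Set.mem_ofPred_eq] at hp hp'
  omega

/-- For `n` odd, with `M = x^{-(n-1)/2}B` and `M^⊥ = x^{-(n+1)/2}B` inside
`V = x⁻ⁿB` (all containing `B`), the ℂ-linear map `ℂ[y,y⁻¹] → M^⊥/M`, `h ↦ [x^{-(n+1)/2}·h]`,
is bijective (injective with range the image of `M^⊥` in `R/M`), and for all `h, h' ∈ ℂ[y,y⁻¹]`
the pairing value `β(x^{-(n+1)/2}h, x^{-(n+1)/2}h')` equals the class of `x⁻¹y⁻¹hh'` in `R/B`,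
where `β` is induced by `(f,g) ↦ xⁿy⁻¹fg`. -/
theorem stmt_5 (n : ℕ) (hn : Odd n) :
    Function.Injective (fun h : Dy =>
      (dil (xxInv ^ ((n - 1) / 2)) Bsub).mkQ (xxInv ^ ((n + 1) / 2) * (h : LaurentR))) ∧
    Set.range (fun h : Dy =>
      (dil (xxInv ^ ((n - 1) / 2)) Bsub).mkQ (xxInv ^ ((n + 1) / 2) * (h : LaurentR)))
      = ((dil (xxInv ^ ((n + 1) / 2)) Bsub).map (dil (xxInv ^ ((n - 1) / 2)) Bsub).mkQ :
          Set (LaurentR ⧸ dil (xxInv ^ ((n - 1) / 2)) Bsub)) ∧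
    ∀ h ∈ Dy, ∀ h' ∈ Dy,
      Bsub.mkQ (xx ^ n * yyInv * (xxInv ^ ((n + 1) / 2) * h) * (xxInv ^ ((n + 1) / 2) * h'))
        = Bsub.mkQ (xxInv * yyInv * (h * h')) := by
  obtain ⟨m, rfl⟩ := hn
  rw [show (2 * m + 1 + 1) / 2 = m + 1 by omega, show (2 * m + 1 - 1) / 2 = m by omega]
  set f := (LinearMap.mulLeft ℂ (xxInv ^ (m + 1))).domRestrict Dy
  have hf : Function.Injective f :=
    (isUnit_xxInv.pow (m + 1)).mul_right_injective.comp Subtype.val_injective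
  have hrange : LinearMap.range f = dil (xxInv ^ (m + 1)) Dy := LinearMap.range_domRestrict _ _
  refine ⟨?_, ?_, fun h _ h' _ => ?_⟩
  · exact Submodule.injective_mkQ_comp hf (hrange ▸ disjoint_dil_xxInv_pow_succ_Dy m)
  · rw [dil_xxInv_pow_succ_Bsub, ← hrange, ← Submodule.range_mkQ_comp_eq_map_sup]
    exact (LinearMap.coe_range ((dil (xxInv ^ m) Bsub).mkQ ∘ₗ f)).symm
  · congr 1
    calc xx ^ (2 * m + 1) * yyInv * (xxInv ^ (m + 1) * h) * (xxInv ^ (m + 1) * h')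
        = xx ^ (2 * m + 1) * xxInv ^ (m + 1) * xxInv ^ (m + 1) * (yyInv * (h * h')) := by ring
      _ = xxInv * yyInv * (h * h') := by rw [xx_pow_mul_xxInv_pow_mul_xxInv_pow, mul_assoc]
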